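/- In any JSBAF satisfying the structural restrictions, the strict-including-minimal labeling SIM is an admissible labeling: every argument labeled IN by SIM is legally IN with respect to SIM, an argument is labeled OUT by SIM if and only if it is legally OUT with respect to SIM, and all strict arguments are labeled IN. -/

import Mathlib

namespace JS

inductive Lab : Type
  | IN | OUT | UNDEC
deriving DecidableEq

structure JSBAF (A : Type) where
  att : A → A → Prop
  supp : Set A → A → Prop
  pref : A → A → Prop

variable {A : Type}

/-- Strict arguments: supported by the empty set or only by strict arguments. -/
inductive Strict (J : JSBAF A) : A → Prop
  | mk (S : Set A) (a : A) (h : J.supp S a) (hS : ∀ b ∈ S, Strict J b) : Strict J a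

/-- Structural restrictions on JSBAFs. -/
structure Restr (J : JSBAF A) : Prop where
  finSupp : ∀ S b, J.supp S b → S.Finite
  uniqSupp : ∀ S S' b, J.supp S b → J.supp S' b → S = S'
  acyc : ∀ a, ¬ Relation.TransGen (fun x y => ∃ S, J.supp S y ∧ x ∈ S) a a
  strictUnatt : ∀ a b, Strict J b → ¬ J.att a b
  prefRefl : ∀ a, J.pref a a
  prefTrans : ∀ a b c, J.pref a b → J.pref b c → J.pref a c
  prefTotal : ∀ a b, J.pref a b ∨ J.pref b a
  strictEq : ∀ a b, Strict J a → Strict J b → J.pref a b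
  strictTop : ∀ a b, ¬ Strict J a → Strict J b → J.pref a b ∧ ¬ J.pref b a

def inL (L : A → Lab) : Set A := {a | L a = Lab.IN}
def outL (L : A → Lab) : Set A := {a | L a = Lab.OUT}
def undecL (L : A → Lab) : Set A := {a | L a = Lab.UNDEC}

/-- Definition 2, item 1: legally IN. -/
def legallyIn (J : JSBAF A) (L : A → Lab) (a : A) : Prop :=
  (∀ b, J.att b a → L b = Lab.OUT) ∧
  ∀ S c, J.supp S c → a ∈ S → (∀ b ∈ S, b ≠ a → J.pref a b) →
    (L c = Lab.IN ∨
     (L c = Lab.UNDEC ∧ ∃ b ∈ S, b ≠ a ∧ (L b = Lab.OUT ∨ L b = Lab.UNDEC)) ∨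
     (L c = Lab.OUT ∧
       ((∃ b ∈ S, b ≠ a ∧ L b = Lab.OUT) ∨
        (∃ b₁ ∈ S, ∃ b₂ ∈ S, b₁ ≠ a ∧ b₂ ≠ a ∧ b₁ ≠ b₂ ∧
          L b₁ = Lab.UNDEC ∧ L b₂ = Lab.UNDEC))))

/-- Definition 2, item 2: legally OUT. -/
def legallyOut (J : JSBAF A) (L : A → Lab) (a : A) : Prop :=
  (∃ b, J.att b a ∧ L b = Lab.IN) ∨
  (∃ (n : ℕ) (S : ℕ → Set A) (b : ℕ → A),
    (∀ i ≤ n, J.supp (S i) (b i)) ∧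
    (∀ i < n, b i ∈ S (i + 1)) ∧
    a ∈ S 0 ∧
    (∀ d ∈ S 0, d ≠ a → L d = Lab.IN) ∧
    (∃ c, J.att c (b n) ∧ L c = Lab.IN) ∧
    (∀ i ≤ n, L (b i) = Lab.OUT) ∧
    (∀ i, 1 ≤ i → i ≤ n → ∀ d ∈ S i, d ≠ b (i - 1) → L d = Lab.IN) ∧
    (∀ d ∈ S 0, d ≠ a → J.pref a d))

/-- Admissible labelings. -/
def Admissible (J : JSBAF A) (L : A → Lab) : Prop :=
  (∀ a, L a = Lab.IN → legallyIn J L a) ∧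
  (∀ a, L a = Lab.OUT ↔ legallyOut J L a) ∧
  (∀ a, Strict J a → L a = Lab.IN)

/-- Preferred labelings: maximal admissible w.r.t. inclusion of IN-sets. -/
def Preferred (J : JSBAF A) (L : A → Lab) : Prop :=
  Admissible J L ∧ ∀ L', Admissible J L' → ¬ (inL L ⊂ inL L')

/-- The iterated OUT-sets of the SIM labeling. -/
def simO (J : JSBAF A) : ℕ → Set A
  | 0 => {a | ∃ b, Strict J b ∧ J.att b a}
  | n + 1 => simO J n ∪
      {a | ∃ S c, J.supp S c ∧ a ∈ S ∧ c ∈ simO J n ∧ ∀ d ∈ S, d ≠ a → Strict J d}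

def simIn (J : JSBAF A) : Set A := {a | Strict J a}
def simOut (J : JSBAF A) : Set A := ⋃ n, simO J n

open Classical in
/-- The strict-including-minimal labeling. -/
noncomputable def SIM (J : JSBAF A) : A → Lab := fun a =>
  if Strict J a then Lab.IN else if a ∈ simOut J then Lab.OUT else Lab.UNDEC

/-- The order on labelings. -/
def leL (L₁ L₂ : A → Lab) : Prop := inL L₁ ⊆ inL L₂ ∧ outL L₁ ⊆ outL L₂

end JS

/-!
Strict arguments are unattacked and lie strictly above every other argument in `⪯`, and
strictness propagates along supports. So if a strict argument is `⪯`-minimal in a supporting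
set, the whole set is strict and the supported argument is IN; and no stage `O n` contains a
strict argument.

The OUT part is an induction along the stages: an argument of `O 0` is attacked by a strict
argument, and an argument `a` entering at stage `n + 1` through a support `(S, c)` with
`c ∈ O n` is legally OUT by prefixing the support chain of `c` with `(S, c)`, all of `S`
other than `a` being strict, hence above `a`. Conversely, the first link `(S 0, b 0)` of a
chain witnessing that `a` is legally OUT puts `a` into the stage after the one containing `b 0`.
-/

namespace JS

variable {A : Type} {J : JSBAF A}

theorem sim_eq_in_iff {a : A} : SIM J a = Lab.IN ↔ Strict J a := by
  unfold SIM
  split_ifs <;> simp [*]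

theorem sim_eq_out_iff {a : A} : SIM J a = Lab.OUT ↔ ¬ Strict J a ∧ a ∈ simOut J := by
  unfold SIM
  split_ifs <;> simp [*]

theorem strict_of_supp {S : Set A} {a c : A} (hc : J.supp S c) (ha : Strict J a)
    (hS : ∀ d ∈ S, d ≠ a → Strict J d) : Strict J c :=
  Strict.mk S c hc fun d hd => (eq_or_ne d a).elim (· ▸ ha) (hS d hd)

theorem Restr.strict_of_pref (hR : Restr J) {a b : A} (ha : Strict J a) (hab : J.pref a b) :
    Strict J b := by
  by_contra hb
  exact (hR.strictTop b a hb ha).2 hab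

theorem Restr.not_strict_of_mem_simO (hR : Restr J) :
    ∀ {n : ℕ} {a : A}, a ∈ simO J n → ¬ Strict J a
  | 0, a, ⟨b, _, hba⟩, ha => hR.strictUnatt b a ha hba
  | _ + 1, _, Or.inl h, ha => hR.not_strict_of_mem_simO h ha
  | _ + 1, _, Or.inr ⟨_, _, hc, _, hcO, hS⟩, ha =>
      hR.not_strict_of_mem_simO hcO (strict_of_supp hc ha hS)

theorem Restr.sim_eq_out_of_mem_simO (hR : Restr J) {n : ℕ} {a : A} (h : a ∈ simO J n) :
    SIM J a = Lab.OUT :=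
  sim_eq_out_iff.mpr ⟨hR.not_strict_of_mem_simO h, Set.mem_iUnion.mpr ⟨n, h⟩⟩

theorem Restr.legallyIn_sim_of_strict (hR : Restr J) {a : A} (ha : Strict J a) :
    legallyIn J (SIM J) a := by
  refine ⟨fun b hba => absurd hba (hR.strictUnatt b a ha), fun S c hc _ hpref => Or.inl ?_⟩
  exact sim_eq_in_iff.mpr
    (strict_of_supp hc ha fun d hd hda => hR.strict_of_pref ha (hpref d hd hda))

theorem legallyOut_of_supp {L : A → Lab} {S : Set A} {a c : A} (hc : J.supp S c) (haS : a ∈ S)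
    (hIn : ∀ d ∈ S, d ≠ a → L d = Lab.IN) (hpref : ∀ d ∈ S, d ≠ a → J.pref a d)
    (hcOut : L c = Lab.OUT) (hc' : legallyOut J L c) : legallyOut J L a := by
  rcases hc' with hatt | ⟨n, S', b, hsupp, hlink, hcS, hIn', hatt, hOut, hmid, -⟩
  · exact Or.inr ⟨0, fun _ => S, fun _ => c, fun _ _ => hc, nofun, haS, hIn, hatt,
      fun _ _ => hcOut, fun _ _ _ => by omega, hpref⟩
  refine Or.inr ⟨n + 1, fun | 0 => S | i + 1 => S' i, fun | 0 => c | i + 1 => b i,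
    ?_, ?_, haS, hIn, hatt, ?_, ?_, hpref⟩
  · rintro (_ | i) hi
    exacts [hc, hsupp i (by omega)]
  · rintro (_ | i) hi
    exacts [hcS, hlink i (by omega)]
  · rintro (_ | i) hi
    exacts [hcOut, hOut i (by omega)]
  · rintro (_ | _ | i) h₁ h₂
    · omega
    · exact hIn'
    · exact hmid (i + 1) (by omega) (by omega)

theorem Restr.legallyOut_sim_of_mem_simO (hR : Restr J) :
    ∀ {n : ℕ} {a : A}, a ∈ simO J n → legallyOut J (SIM J) a
  | 0, _, ⟨b, hb, hba⟩ => Or.inl ⟨b, hba, sim_eq_in_iff.mpr hb⟩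
  | _ + 1, _, Or.inl h => hR.legallyOut_sim_of_mem_simO h
  | _ + 1, a, h@(Or.inr ⟨_, _, hc, haS, hcO, hS⟩) =>
      have ha := hR.not_strict_of_mem_simO h
      legallyOut_of_supp hc haS (fun d hd hda => sim_eq_in_iff.mpr (hS d hd hda))
        (fun d hd hda => (hR.strictTop a d ha (hS d hd hda)).1)
        (hR.sim_eq_out_of_mem_simO hcO) (hR.legallyOut_sim_of_mem_simO hcO)

theorem Restr.sim_eq_out_of_legallyOut (hR : Restr J) {a : A}
    (h : legallyOut J (SIM J) a) : SIM J a = Lab.OUT := by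
  rcases h with ⟨b, hba, hb⟩ | ⟨n, S, b, hsupp, -, haS, hIn, -, hOut, -, -⟩
  · exact hR.sim_eq_out_of_mem_simO (n := 0) ⟨b, sim_eq_in_iff.mp hb, hba⟩
  obtain ⟨-, hb₀⟩ := sim_eq_out_iff.mp (hOut 0 n.zero_le)
  obtain ⟨m, hm⟩ := Set.mem_iUnion.mp hb₀
  exact hR.sim_eq_out_of_mem_simO (n := m + 1) <| Or.inr
    ⟨S 0, b 0, hsupp 0 n.zero_le, haS, hm, fun d hd hda => sim_eq_in_iff.mp (hIn d hd hda)⟩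

end JS

open JS in
/-- In any JSBAF satisfying the structural restrictions, the SIM labeling is
admissible. -/
theorem sim_admissible {A : Type} (J : JSBAF A) (hR : Restr J) :
    Admissible J (SIM J) := by
  refine ⟨fun a ha => hR.legallyIn_sim_of_strict (sim_eq_in_iff.mp ha),
    fun a => ⟨fun ha => ?_, hR.sim_eq_out_of_legallyOut⟩, fun a => sim_eq_in_iff.mpr⟩
  obtain ⟨n, hn⟩ := Set.mem_iUnion.mp (sim_eq_out_iff.mp ha).2
  exact hR.legallyOut_sim_of_mem_simO hn
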